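/- Let f be a mapping from the vertex set of the diamond graph D_2 into L^1([0,1]) and let c be a constant such that for all vertices a, b of D_2: d(a,b) ≤ ‖f(a) − f(b)‖_1 ≤ c·d(a,b), where d is the shortest-path metric on D_2. Then c ≥ 5/4. -/

import Mathlib

/-- A graph presented by an (oriented) edge family with source and target maps. -/
structure PreGraph where
  V : Type
  E : Type
  s : E → V
  t : E → V

/-- Replace every edge `uv` of `G` by a quadrilateral `u, a, v, b` with edges
`ua, av, vb, bu`. The two new internal vertices per edge are indexed by `Fin 2`
as `0 = a`, `1 = b`. -/
def diamondStep (G : PreGraph) : PreGraph where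
  V := G.V ⊕ (G.E × Fin 2)
  E := G.E × Fin 4
  s := fun p => ![Sum.inl (G.s p.1), Sum.inr (p.1, 0),
                  Sum.inl (G.t p.1), Sum.inr (p.1, 1)] p.2
  t := fun p => ![Sum.inr (p.1, 0), Sum.inl (G.t p.1),
                  Sum.inr (p.1, 1), Sum.inl (G.s p.1)] p.2

/-- The diamond graph `Dₙ`: `D₀` is a single edge, and `Dₙ` is obtained from `Dₙ₋₁`
by replacing each edge `uv` by a quadrilateral `u, a, v, b`. -/
def diamondPre : ℕ → PreGraph
  | 0 => ⟨Fin 2, Fin 1, fun _ => 0, fun _ => 1⟩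
  | n + 1 => diamondStep (diamondPre n)

/-- The diamond graph `Dₙ` as a simple graph on its vertex set. -/
def diamondGraph (n : ℕ) : SimpleGraph (diamondPre n).V :=
  SimpleGraph.fromRel (fun u v => ∃ e, (diamondPre n).s e = u ∧ (diamondPre n).t e = v)

/-- The shortest-path metric on the diamond graph `Dₙ`, as a real number. -/
noncomputable def diamondDist (n : ℕ) (a b : (diamondPre n).V) : ℝ :=
  ((diamondGraph n).dist a b : ℝ)

open MeasureTheory

/-- Lebesgue measure restricted to `[0,1]`; `Lp ℝ 1` of this measure is `L¹([0,1])`. -/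
noncomputable def μ01 : Measure ℝ := volume.restrict (Set.Icc (0 : ℝ) 1)

instance : DecidableEq (diamondPre 2).V :=
  inferInstanceAs (DecidableEq ((Fin 2 ⊕ Fin 1 × Fin 2) ⊕ (Fin 1 × Fin 4) × Fin 2))

instance : Fintype (diamondPre 2).E :=
  inferInstanceAs (Fintype ((Fin 1 × Fin 4) × Fin 4))

lemma dgAdj {u v : (diamondPre 2).V} (e : (diamondPre 2).E)
    (hs : (diamondPre 2).s e = u) (ht : (diamondPre 2).t e = v) (hne : u ≠ v) :
    (diamondGraph 2).Adj u v := by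
  rw [diamondGraph, SimpleGraph.fromRel_adj]
  exact ⟨hne, Or.inl ⟨e, hs, ht⟩⟩

def dgTbl (z0 z1 z2 z3 z4 z5 z6 z7 z8 z9 z10 z11 : ℤ) :
    (Fin 2 ⊕ Fin 1 × Fin 2) ⊕ (Fin 1 × Fin 4) × Fin 2 → ℤ
  | Sum.inl (Sum.inl i) => ![z0, z1] i
  | Sum.inl (Sum.inr (_, j)) => ![z2, z3] j
  | Sum.inr ((_, k), j) => ![![z4,z5], ![z6,z7], ![z8,z9], ![z10,z11]] k j

def dw0 : (diamondPre 2).V := Sum.inl (Sum.inl (0 : Fin 2))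
def dw1 : (diamondPre 2).V := Sum.inl (Sum.inl (1 : Fin 2))
def dw2 : (diamondPre 2).V := Sum.inl (Sum.inr ((0 : Fin 1), (0 : Fin 2)))
def dw3 : (diamondPre 2).V := Sum.inl (Sum.inr ((0 : Fin 1), (1 : Fin 2)))
def dw4 : (diamondPre 2).V := Sum.inr (((0 : Fin 1), (0 : Fin 4)), (0 : Fin 2))
def dw5 : (diamondPre 2).V := Sum.inr (((0 : Fin 1), (0 : Fin 4)), (1 : Fin 2))
def dw6 : (diamondPre 2).V := Sum.inr (((0 : Fin 1), (1 : Fin 4)), (0 : Fin 2))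
def dw7 : (diamondPre 2).V := Sum.inr (((0 : Fin 1), (1 : Fin 4)), (1 : Fin 2))
def dw8 : (diamondPre 2).V := Sum.inr (((0 : Fin 1), (2 : Fin 4)), (0 : Fin 2))
def dw9 : (diamondPre 2).V := Sum.inr (((0 : Fin 1), (2 : Fin 4)), (1 : Fin 2))
def dw10 : (diamondPre 2).V := Sum.inr (((0 : Fin 1), (3 : Fin 4)), (0 : Fin 2))
def dw11 : (diamondPre 2).V := Sum.inr (((0 : Fin 1), (3 : Fin 4)), (1 : Fin 2))

lemma adjE0 : (diamondGraph 2).Adj dw0 dw4 :=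
  dgAdj (((0 : Fin 1), (0 : Fin 4)), (0 : Fin 4)) rfl rfl (by decide)
lemma adjE1 : (diamondGraph 2).Adj dw4 dw2 :=
  dgAdj (((0 : Fin 1), (0 : Fin 4)), (1 : Fin 4)) rfl rfl (by decide)
lemma adjE2 : (diamondGraph 2).Adj dw2 dw5 :=
  dgAdj (((0 : Fin 1), (0 : Fin 4)), (2 : Fin 4)) rfl rfl (by decide)
lemma adjE3 : (diamondGraph 2).Adj dw5 dw0 :=
  dgAdj (((0 : Fin 1), (0 : Fin 4)), (3 : Fin 4)) rfl rfl (by decide)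
lemma adjE4 : (diamondGraph 2).Adj dw2 dw6 :=
  dgAdj (((0 : Fin 1), (1 : Fin 4)), (0 : Fin 4)) rfl rfl (by decide)
lemma adjE5 : (diamondGraph 2).Adj dw6 dw1 :=
  dgAdj (((0 : Fin 1), (1 : Fin 4)), (1 : Fin 4)) rfl rfl (by decide)
lemma adjE6 : (diamondGraph 2).Adj dw1 dw7 :=
  dgAdj (((0 : Fin 1), (1 : Fin 4)), (2 : Fin 4)) rfl rfl (by decide)
lemma adjE7 : (diamondGraph 2).Adj dw7 dw2 :=
  dgAdj (((0 : Fin 1), (1 : Fin 4)), (3 : Fin 4)) rfl rfl (by decide)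
lemma adjE8 : (diamondGraph 2).Adj dw1 dw8 :=
  dgAdj (((0 : Fin 1), (2 : Fin 4)), (0 : Fin 4)) rfl rfl (by decide)
lemma adjE9 : (diamondGraph 2).Adj dw8 dw3 :=
  dgAdj (((0 : Fin 1), (2 : Fin 4)), (1 : Fin 4)) rfl rfl (by decide)
lemma adjE10 : (diamondGraph 2).Adj dw3 dw9 :=
  dgAdj (((0 : Fin 1), (2 : Fin 4)), (2 : Fin 4)) rfl rfl (by decide)
lemma adjE11 : (diamondGraph 2).Adj dw9 dw1 :=
  dgAdj (((0 : Fin 1), (2 : Fin 4)), (3 : Fin 4)) rfl rfl (by decide)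
lemma adjE12 : (diamondGraph 2).Adj dw3 dw10 :=
  dgAdj (((0 : Fin 1), (3 : Fin 4)), (0 : Fin 4)) rfl rfl (by decide)
lemma adjE13 : (diamondGraph 2).Adj dw10 dw0 :=
  dgAdj (((0 : Fin 1), (3 : Fin 4)), (1 : Fin 4)) rfl rfl (by decide)
lemma adjE14 : (diamondGraph 2).Adj dw0 dw11 :=
  dgAdj (((0 : Fin 1), (3 : Fin 4)), (2 : Fin 4)) rfl rfl (by decide)
lemma adjE15 : (diamondGraph 2).Adj dw11 dw3 :=
  dgAdj (((0 : Fin 1), (3 : Fin 4)), (3 : Fin 4)) rfl rfl (by decide)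

def wk45 : (diamondGraph 2).Walk dw4 dw5 := (.cons adjE1 (.cons adjE2 .nil))
def wk67 : (diamondGraph 2).Walk dw6 dw7 := (.cons adjE5 (.cons adjE6 .nil))
def wk89 : (diamondGraph 2).Walk dw8 dw9 := (.cons adjE9 (.cons adjE10 .nil))
def wk1011 : (diamondGraph 2).Walk dw10 dw11 := (.cons adjE13 (.cons adjE14 .nil))
def wk48 : (diamondGraph 2).Walk dw4 dw8 := (.cons adjE1 (.cons adjE4 (.cons adjE5 (.cons adjE8 .nil))))
def wk49 : (diamondGraph 2).Walk dw4 dw9 := (.cons adjE1 (.cons adjE4 (.cons adjE5 (.cons adjE11.symm .nil))))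
def wk58 : (diamondGraph 2).Walk dw5 dw8 := (.cons adjE2.symm (.cons adjE4 (.cons adjE5 (.cons adjE8 .nil))))
def wk59 : (diamondGraph 2).Walk dw5 dw9 := (.cons adjE2.symm (.cons adjE4 (.cons adjE5 (.cons adjE11.symm .nil))))
def wk610 : (diamondGraph 2).Walk dw6 dw10 := (.cons adjE4.symm (.cons adjE1.symm (.cons adjE0.symm (.cons adjE13.symm .nil))))
def wk611 : (diamondGraph 2).Walk dw6 dw11 := (.cons adjE4.symm (.cons adjE1.symm (.cons adjE0.symm (.cons adjE14 .nil))))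
def wk710 : (diamondGraph 2).Walk dw7 dw10 := (.cons adjE7 (.cons adjE1.symm (.cons adjE0.symm (.cons adjE13.symm .nil))))
def wk711 : (diamondGraph 2).Walk dw7 dw11 := (.cons adjE7 (.cons adjE1.symm (.cons adjE0.symm (.cons adjE14 .nil))))
def wk02 : (diamondGraph 2).Walk dw0 dw2 := (.cons adjE0 (.cons adjE1 .nil))
def wk03 : (diamondGraph 2).Walk dw0 dw3 := (.cons adjE14 (.cons adjE15 .nil))
def wk12 : (diamondGraph 2).Walk dw1 dw2 := (.cons adjE6 (.cons adjE7 .nil))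
def wk13 : (diamondGraph 2).Walk dw1 dw3 := (.cons adjE8 (.cons adjE9 .nil))
def wke0_4 : (diamondGraph 2).Walk dw0 dw4 := (.cons adjE0 .nil)
def wke2_4 : (diamondGraph 2).Walk dw2 dw4 := (.cons adjE1.symm .nil)
def wke2_5 : (diamondGraph 2).Walk dw2 dw5 := (.cons adjE2 .nil)
def wke0_5 : (diamondGraph 2).Walk dw0 dw5 := (.cons adjE3.symm .nil)
def wke2_6 : (diamondGraph 2).Walk dw2 dw6 := (.cons adjE4 .nil)
def wke1_6 : (diamondGraph 2).Walk dw1 dw6 := (.cons adjE5.symm .nil)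
def wke1_7 : (diamondGraph 2).Walk dw1 dw7 := (.cons adjE6 .nil)
def wke2_7 : (diamondGraph 2).Walk dw2 dw7 := (.cons adjE7.symm .nil)
def wke1_8 : (diamondGraph 2).Walk dw1 dw8 := (.cons adjE8 .nil)
def wke3_8 : (diamondGraph 2).Walk dw3 dw8 := (.cons adjE9.symm .nil)
def wke3_9 : (diamondGraph 2).Walk dw3 dw9 := (.cons adjE10 .nil)
def wke1_9 : (diamondGraph 2).Walk dw1 dw9 := (.cons adjE11.symm .nil)
def wke3_10 : (diamondGraph 2).Walk dw3 dw10 := (.cons adjE12 .nil)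
def wke0_10 : (diamondGraph 2).Walk dw0 dw10 := (.cons adjE13.symm .nil)
def wke0_11 : (diamondGraph 2).Walk dw0 dw11 := (.cons adjE14 .nil)
def wke3_11 : (diamondGraph 2).Walk dw3 dw11 := (.cons adjE15.symm .nil)

def dgPhiA : (Fin 2 ⊕ Fin 1 × Fin 2) ⊕ (Fin 1 × Fin 4) × Fin 2 → ℤ :=
  dgTbl 1 3 1 3 0 2 2 2 4 4 2 2
def dgPhiB : (Fin 2 ⊕ Fin 1 × Fin 2) ⊕ (Fin 1 × Fin 4) × Fin 2 → ℤ :=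
  dgTbl 1 3 1 3 2 0 2 2 4 4 2 2
def dgPhiC : (Fin 2 ⊕ Fin 1 × Fin 2) ⊕ (Fin 1 × Fin 4) × Fin 2 → ℤ :=
  dgTbl 3 1 1 3 2 2 0 2 2 2 4 4
def dgPhiD : (Fin 2 ⊕ Fin 1 × Fin 2) ⊕ (Fin 1 × Fin 4) × Fin 2 → ℤ :=
  dgTbl 3 1 1 3 2 2 2 0 2 2 4 4
def dgPhiE : (Fin 2 ⊕ Fin 1 × Fin 2) ⊕ (Fin 1 × Fin 4) × Fin 2 → ℤ :=
  dgTbl 3 1 3 1 4 4 2 2 0 2 2 2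
def dgPhiF : (Fin 2 ⊕ Fin 1 × Fin 2) ⊕ (Fin 1 × Fin 4) × Fin 2 → ℤ :=
  dgTbl 1 3 3 1 2 2 4 4 2 2 0 2

lemma dgLipA : ∀ e : (diamondPre 2).E,
    |dgPhiA ((diamondPre 2).s e) - dgPhiA ((diamondPre 2).t e)| ≤ 1 := by decide
lemma dgLipB : ∀ e : (diamondPre 2).E,
    |dgPhiB ((diamondPre 2).s e) - dgPhiB ((diamondPre 2).t e)| ≤ 1 := by decide
lemma dgLipC : ∀ e : (diamondPre 2).E,
    |dgPhiC ((diamondPre 2).s e) - dgPhiC ((diamondPre 2).t e)| ≤ 1 := by decide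
lemma dgLipD : ∀ e : (diamondPre 2).E,
    |dgPhiD ((diamondPre 2).s e) - dgPhiD ((diamondPre 2).t e)| ≤ 1 := by decide
lemma dgLipE : ∀ e : (diamondPre 2).E,
    |dgPhiE ((diamondPre 2).s e) - dgPhiE ((diamondPre 2).t e)| ≤ 1 := by decide
lemma dgLipF : ∀ e : (diamondPre 2).E,
    |dgPhiF ((diamondPre 2).s e) - dgPhiF ((diamondPre 2).t e)| ≤ 1 := by decide


lemma dgWalk_lb {V : Type} {G : SimpleGraph V} (φ : V → ℤ)
    (hφ : ∀ u v, G.Adj u v → |φ u - φ v| ≤ 1) :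
    ∀ {a b : V} (w : G.Walk a b), |φ a - φ b| ≤ (w.length : ℤ) := by
  intro a b w
  induction w with
  | nil => simp
  | @cons u v w h p ih =>
      have h1 := hφ u v h
      have h2 : |φ u - φ w| ≤ |φ u - φ v| + |φ v - φ w| := abs_sub_le _ _ _
      rw [SimpleGraph.Walk.length_cons]
      push_cast
      linarith

lemma dgDist_lb (φ : (Fin 2 ⊕ Fin 1 × Fin 2) ⊕ (Fin 1 × Fin 4) × Fin 2 → ℤ)
    (hφ : ∀ e : (diamondPre 2).E, |φ ((diamondPre 2).s e) - φ ((diamondPre 2).t e)| ≤ 1)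
    {a b : (diamondPre 2).V} (w : (diamondGraph 2).Walk a b) (k : ℕ)
    (hk : (k : ℤ) ≤ |φ a - φ b|) : (k : ℝ) ≤ diamondDist 2 a b := by
  have hadj : ∀ u v, (diamondGraph 2).Adj u v → |φ u - φ v| ≤ 1 := by
    intro u v h
    rw [diamondGraph, SimpleGraph.fromRel_adj] at h
    rcases h with ⟨-, ⟨e, he1, he2⟩ | ⟨e, he1, he2⟩⟩
    · subst he1; subst he2; exact hφ e
    · subst he1; subst he2; rw [abs_sub_comm]; exact hφ e
  obtain ⟨p, hp⟩ := w.reachable.exists_walk_length_eq_dist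
  have h2 := dgWalk_lb φ hadj p
  replace h2 : |φ a - φ b| ≤ ((diamondGraph 2).dist a b : ℤ) := by rw [← hp]; exact h2
  have h3 : (k : ℤ) ≤ ((diamondGraph 2).dist a b : ℤ) := le_trans hk h2
  rw [diamondDist]
  exact_mod_cast h3

lemma dgDist_ub {a b : (diamondPre 2).V} (w : (diamondGraph 2).Walk a b) (k : ℕ)
    (hk : w.length = k) : diamondDist 2 a b ≤ (k : ℝ) := by
  have := SimpleGraph.dist_le w
  rw [hk] at this
  rw [diamondDist]
  exact_mod_cast this


lemma dgPent_core (a b c d e : ℝ) (h1 : a ≤ b) (h2 : b ≤ c) (h3 : d ≤ e) :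
    |a-b|+|a-c|+|b-c|+|d-e| ≤ |d-a|+|d-b|+|d-c|+|e-a|+|e-b|+|e-c| := by
  rw [abs_of_nonpos (by linarith : a - b ≤ 0), abs_of_nonpos (by linarith : a - c ≤ 0),
      abs_of_nonpos (by linarith : b - c ≤ 0), abs_of_nonpos (by linarith : d - e ≤ 0)]
  rcases abs_cases (d-a) with ⟨e1,f1⟩|⟨e1,f1⟩ <;> rcases abs_cases (d-b) with ⟨e2,f2⟩|⟨e2,f2⟩ <;>
    rcases abs_cases (d-c) with ⟨e3,f3⟩|⟨e3,f3⟩ <;> rcases abs_cases (e-a) with ⟨e4,f4⟩|⟨e4,f4⟩ <;>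
    rcases abs_cases (e-b) with ⟨e5,f5⟩|⟨e5,f5⟩ <;> rcases abs_cases (e-c) with ⟨e6,f6⟩|⟨e6,f6⟩ <;>
    rw [e1,e2,e3,e4,e5,e6] <;> linarith

lemma dgPent_real (a b c d e : ℝ) :
    |a-b|+|a-c|+|b-c|+|d-e| ≤ |d-a|+|d-b|+|d-c|+|e-a|+|e-b|+|e-c| := by
  have L : ∀ x y z : ℝ, x ≤ y → y ≤ z →
      |x-y|+|x-z|+|y-z|+|d-e| ≤ |d-x|+|d-y|+|d-z|+|e-x|+|e-y|+|e-z| := by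
    intro x y z h1 h2
    rcases le_total d e with hde|hde
    · exact dgPent_core x y z d e h1 h2 hde
    · have := dgPent_core x y z e d h1 h2 hde
      have h4 : |e - d| = |d - e| := abs_sub_comm e d
      linarith
  rcases le_total a b with h1|h1
  · rcases le_total b c with h2|h2
    · exact L a b c h1 h2
    · rcases le_total a c with h3|h3
      · have := L a c b h3 h2; have := abs_sub_comm b c; linarith
      · have := L c a b h3 h1
        have := abs_sub_comm a c; have := abs_sub_comm b c; linarith
  · rcases le_total a c with h2|h2
    · have := L b a c h1 h2; have := abs_sub_comm a b; linarith
    · rcases le_total b c with h3|h3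
      · have := L b c a h3 h2
        have := abs_sub_comm a b; have := abs_sub_comm a c; linarith
      · have := L c b a h3 h1
        have := abs_sub_comm a b; have := abs_sub_comm a c; have := abs_sub_comm b c; linarith

lemma dgTriA {E : Type*} [SeminormedAddCommGroup E] (x y z : E) :
    ‖x - z‖ ≤ ‖x - y‖ + ‖y - z‖ := by
  have h : x - z = (x - y) + (y - z) := by abel
  rw [h]; exact norm_add_le _ _

lemma dgTriB {E : Type*} [SeminormedAddCommGroup E] (x y z : E) :
    ‖x - z‖ ≤ ‖y - x‖ + ‖y - z‖ := by
  have := dgTriA x y z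
  rw [norm_sub_rev x y] at this
  exact this

lemma dgPentN (x1 x2 x3 y1 y2 : Lp ℝ 1 μ01) :
    ‖x1 - x2‖ + ‖x1 - x3‖ + ‖x2 - x3‖ + ‖y1 - y2‖ ≤
      ‖y1 - x1‖ + ‖y1 - x2‖ + ‖y1 - x3‖ + ‖y2 - x1‖ + ‖y2 - x2‖ + ‖y2 - x3‖ := by
  have nrm : ∀ u v : Lp ℝ 1 μ01, ‖u - v‖ = ∫ t, ‖(u - v : Lp ℝ 1 μ01) t‖ ∂μ01 := fun u v =>
    L1.norm_eq_integral_norm (u - v)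
  have igr : ∀ u v : Lp ℝ 1 μ01, Integrable (fun t => ‖(u - v : Lp ℝ 1 μ01) t‖) μ01 := fun u v =>
    (L1.integrable_coeFn (u - v)).norm
  rw [nrm x1 x2, nrm x1 x3, nrm x2 x3, nrm y1 y2, nrm y1 x1, nrm y1 x2, nrm y1 x3,
      nrm y2 x1, nrm y2 x2, nrm y2 x3]
  have iL2 : Integrable (fun t => ‖(x1 - x2 : Lp ℝ 1 μ01) t‖ + ‖(x1 - x3 : Lp ℝ 1 μ01) t‖) μ01 :=
    (igr x1 x2).add (igr x1 x3)
  have iL3 : Integrable (fun t => ‖(x1 - x2 : Lp ℝ 1 μ01) t‖ + ‖(x1 - x3 : Lp ℝ 1 μ01) t‖ + ‖(x2 - x3 : Lp ℝ 1 μ01) t‖) μ01 :=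
    iL2.add (igr x2 x3)
  have iL4 : Integrable (fun t => ‖(x1 - x2 : Lp ℝ 1 μ01) t‖ + ‖(x1 - x3 : Lp ℝ 1 μ01) t‖ + ‖(x2 - x3 : Lp ℝ 1 μ01) t‖ + ‖(y1 - y2 : Lp ℝ 1 μ01) t‖) μ01 :=
    iL3.add (igr y1 y2)
  have iR2 : Integrable (fun t => ‖(y1 - x1 : Lp ℝ 1 μ01) t‖ + ‖(y1 - x2 : Lp ℝ 1 μ01) t‖) μ01 :=
    (igr y1 x1).add (igr y1 x2)
  have iR3 : Integrable (fun t => ‖(y1 - x1 : Lp ℝ 1 μ01) t‖ + ‖(y1 - x2 : Lp ℝ 1 μ01) t‖ + ‖(y1 - x3 : Lp ℝ 1 μ01) t‖) μ01 :=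
    iR2.add (igr y1 x3)
  have iR4 : Integrable (fun t => ‖(y1 - x1 : Lp ℝ 1 μ01) t‖ + ‖(y1 - x2 : Lp ℝ 1 μ01) t‖ + ‖(y1 - x3 : Lp ℝ 1 μ01) t‖ + ‖(y2 - x1 : Lp ℝ 1 μ01) t‖) μ01 :=
    iR3.add (igr y2 x1)
  have iR5 : Integrable (fun t => ‖(y1 - x1 : Lp ℝ 1 μ01) t‖ + ‖(y1 - x2 : Lp ℝ 1 μ01) t‖ + ‖(y1 - x3 : Lp ℝ 1 μ01) t‖ + ‖(y2 - x1 : Lp ℝ 1 μ01) t‖ + ‖(y2 - x2 : Lp ℝ 1 μ01) t‖) μ01 :=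
    iR4.add (igr y2 x2)
  have iR6 : Integrable (fun t => ‖(y1 - x1 : Lp ℝ 1 μ01) t‖ + ‖(y1 - x2 : Lp ℝ 1 μ01) t‖ + ‖(y1 - x3 : Lp ℝ 1 μ01) t‖ + ‖(y2 - x1 : Lp ℝ 1 μ01) t‖ + ‖(y2 - x2 : Lp ℝ 1 μ01) t‖ + ‖(y2 - x3 : Lp ℝ 1 μ01) t‖) μ01 :=
    iR5.add (igr y2 x3)
  rw [← integral_add (igr x1 x2) (igr x1 x3), ← integral_add iL2 (igr x2 x3),
      ← integral_add iL3 (igr y1 y2)]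
  rw [← integral_add (igr y1 x1) (igr y1 x2), ← integral_add iR2 (igr y1 x3),
      ← integral_add iR3 (igr y2 x1), ← integral_add iR4 (igr y2 x2),
      ← integral_add iR5 (igr y2 x3)]
  refine integral_mono_ae iL4 iR6 ?_
  filter_upwards [Lp.coeFn_sub x1 x2, Lp.coeFn_sub x1 x3, Lp.coeFn_sub x2 x3, Lp.coeFn_sub y1 y2,
    Lp.coeFn_sub y1 x1, Lp.coeFn_sub y1 x2, Lp.coeFn_sub y1 x3,
    Lp.coeFn_sub y2 x1, Lp.coeFn_sub y2 x2, Lp.coeFn_sub y2 x3] with t h1 h2 h3 h4 h5 h6 h7 h8 h9 h10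
  simp only [Pi.sub_apply] at h1 h2 h3 h4 h5 h6 h7 h8 h9 h10
  simp only [h1, h2, h3, h4, h5, h6, h7, h8, h9, h10, Real.norm_eq_abs]
  exact dgPent_real (x1 t) (x2 t) (x3 t) (y1 t) (y2 t)

/-- **Theorem 4.** Any embedding of the diamond graph `D₂` into `L¹([0,1])` satisfying
`d(a,b) ≤ ‖f a − f b‖₁ ≤ c · d(a,b)` has `c ≥ 5/4`. -/
theorem diamond_stmt6 (f : (diamondPre 2).V → Lp ℝ 1 μ01) (c : ℝ)
    (hf : ∀ a b : (diamondPre 2).V,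
      diamondDist 2 a b ≤ ‖f a - f b‖ ∧ ‖f a - f b‖ ≤ c * diamondDist 2 a b) :
    c ≥ 5 / 4 := by
  -- c is nonnegative
  have h48l := dgDist_lb dgPhiA dgLipA wk48 4 (by decide)
  have h48u := dgDist_ub wk48 4 rfl
  have hc : 0 ≤ c := by
    have h1 := (hf dw4 dw8).1
    have h2 := (hf dw4 dw8).2
    have heq : diamondDist 2 dw4 dw8 = ((4 : ℕ) : ℝ) := le_antisymm h48u h48l
    rw [heq] at h1 h2
    norm_num at h1 h2
    linarith
  -- lower bounds
  have hl4_5 : (2 : ℝ) ≤ ‖f dw4 - f dw5‖ := by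
    have h := dgDist_lb dgPhiA dgLipA wk45 2 (by decide)
    norm_num at h
    exact le_trans h (hf dw4 dw5).1
  have hl6_7 : (2 : ℝ) ≤ ‖f dw6 - f dw7‖ := by
    have h := dgDist_lb dgPhiC dgLipC wk67 2 (by decide)
    norm_num at h
    exact le_trans h (hf dw6 dw7).1
  have hl8_9 : (2 : ℝ) ≤ ‖f dw8 - f dw9‖ := by
    have h := dgDist_lb dgPhiE dgLipE wk89 2 (by decide)
    norm_num at h
    exact le_trans h (hf dw8 dw9).1
  have hl10_11 : (2 : ℝ) ≤ ‖f dw10 - f dw11‖ := by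
    have h := dgDist_lb dgPhiF dgLipF wk1011 2 (by decide)
    norm_num at h
    exact le_trans h (hf dw10 dw11).1
  have hl4_8 : (4 : ℝ) ≤ ‖f dw4 - f dw8‖ := by
    have h := dgDist_lb dgPhiA dgLipA wk48 4 (by decide)
    norm_num at h
    exact le_trans h (hf dw4 dw8).1
  have hl4_9 : (4 : ℝ) ≤ ‖f dw4 - f dw9‖ := by
    have h := dgDist_lb dgPhiA dgLipA wk49 4 (by decide)
    norm_num at h
    exact le_trans h (hf dw4 dw9).1
  have hl5_8 : (4 : ℝ) ≤ ‖f dw5 - f dw8‖ := by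
    have h := dgDist_lb dgPhiB dgLipB wk58 4 (by decide)
    norm_num at h
    exact le_trans h (hf dw5 dw8).1
  have hl5_9 : (4 : ℝ) ≤ ‖f dw5 - f dw9‖ := by
    have h := dgDist_lb dgPhiB dgLipB wk59 4 (by decide)
    norm_num at h
    exact le_trans h (hf dw5 dw9).1
  have hl6_10 : (4 : ℝ) ≤ ‖f dw6 - f dw10‖ := by
    have h := dgDist_lb dgPhiC dgLipC wk610 4 (by decide)
    norm_num at h
    exact le_trans h (hf dw6 dw10).1
  have hl6_11 : (4 : ℝ) ≤ ‖f dw6 - f dw11‖ := by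
    have h := dgDist_lb dgPhiC dgLipC wk611 4 (by decide)
    norm_num at h
    exact le_trans h (hf dw6 dw11).1
  have hl7_10 : (4 : ℝ) ≤ ‖f dw7 - f dw10‖ := by
    have h := dgDist_lb dgPhiD dgLipD wk710 4 (by decide)
    norm_num at h
    exact le_trans h (hf dw7 dw10).1
  have hl7_11 : (4 : ℝ) ≤ ‖f dw7 - f dw11‖ := by
    have h := dgDist_lb dgPhiD dgLipD wk711 4 (by decide)
    norm_num at h
    exact le_trans h (hf dw7 dw11).1
  -- upper bounds
  have hu0_2 : ‖f dw0 - f dw2‖ ≤ c * 2 := by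
    have h := dgDist_ub wk02 2 rfl
    norm_num at h
    exact le_trans (hf dw0 dw2).2 (mul_le_mul_of_nonneg_left h hc)
  have hu0_3 : ‖f dw0 - f dw3‖ ≤ c * 2 := by
    have h := dgDist_ub wk03 2 rfl
    norm_num at h
    exact le_trans (hf dw0 dw3).2 (mul_le_mul_of_nonneg_left h hc)
  have hu1_2 : ‖f dw1 - f dw2‖ ≤ c * 2 := by
    have h := dgDist_ub wk12 2 rfl
    norm_num at h
    exact le_trans (hf dw1 dw2).2 (mul_le_mul_of_nonneg_left h hc)
  have hu1_3 : ‖f dw1 - f dw3‖ ≤ c * 2 := by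
    have h := dgDist_ub wk13 2 rfl
    norm_num at h
    exact le_trans (hf dw1 dw3).2 (mul_le_mul_of_nonneg_left h hc)
  have hu0_4 : ‖f dw0 - f dw4‖ ≤ c * 1 := by
    have h := dgDist_ub wke0_4 1 rfl
    norm_num at h
    exact le_trans (hf dw0 dw4).2 (mul_le_mul_of_nonneg_left h hc)
  have hu2_4 : ‖f dw2 - f dw4‖ ≤ c * 1 := by
    have h := dgDist_ub wke2_4 1 rfl
    norm_num at h
    exact le_trans (hf dw2 dw4).2 (mul_le_mul_of_nonneg_left h hc)
  have hu2_5 : ‖f dw2 - f dw5‖ ≤ c * 1 := by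
    have h := dgDist_ub wke2_5 1 rfl
    norm_num at h
    exact le_trans (hf dw2 dw5).2 (mul_le_mul_of_nonneg_left h hc)
  have hu0_5 : ‖f dw0 - f dw5‖ ≤ c * 1 := by
    have h := dgDist_ub wke0_5 1 rfl
    norm_num at h
    exact le_trans (hf dw0 dw5).2 (mul_le_mul_of_nonneg_left h hc)
  have hu2_6 : ‖f dw2 - f dw6‖ ≤ c * 1 := by
    have h := dgDist_ub wke2_6 1 rfl
    norm_num at h
    exact le_trans (hf dw2 dw6).2 (mul_le_mul_of_nonneg_left h hc)
  have hu1_6 : ‖f dw1 - f dw6‖ ≤ c * 1 := by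
    have h := dgDist_ub wke1_6 1 rfl
    norm_num at h
    exact le_trans (hf dw1 dw6).2 (mul_le_mul_of_nonneg_left h hc)
  have hu1_7 : ‖f dw1 - f dw7‖ ≤ c * 1 := by
    have h := dgDist_ub wke1_7 1 rfl
    norm_num at h
    exact le_trans (hf dw1 dw7).2 (mul_le_mul_of_nonneg_left h hc)
  have hu2_7 : ‖f dw2 - f dw7‖ ≤ c * 1 := by
    have h := dgDist_ub wke2_7 1 rfl
    norm_num at h
    exact le_trans (hf dw2 dw7).2 (mul_le_mul_of_nonneg_left h hc)
  have hu1_8 : ‖f dw1 - f dw8‖ ≤ c * 1 := by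
    have h := dgDist_ub wke1_8 1 rfl
    norm_num at h
    exact le_trans (hf dw1 dw8).2 (mul_le_mul_of_nonneg_left h hc)
  have hu3_8 : ‖f dw3 - f dw8‖ ≤ c * 1 := by
    have h := dgDist_ub wke3_8 1 rfl
    norm_num at h
    exact le_trans (hf dw3 dw8).2 (mul_le_mul_of_nonneg_left h hc)
  have hu3_9 : ‖f dw3 - f dw9‖ ≤ c * 1 := by
    have h := dgDist_ub wke3_9 1 rfl
    norm_num at h
    exact le_trans (hf dw3 dw9).2 (mul_le_mul_of_nonneg_left h hc)
  have hu1_9 : ‖f dw1 - f dw9‖ ≤ c * 1 := by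
    have h := dgDist_ub wke1_9 1 rfl
    norm_num at h
    exact le_trans (hf dw1 dw9).2 (mul_le_mul_of_nonneg_left h hc)
  have hu3_10 : ‖f dw3 - f dw10‖ ≤ c * 1 := by
    have h := dgDist_ub wke3_10 1 rfl
    norm_num at h
    exact le_trans (hf dw3 dw10).2 (mul_le_mul_of_nonneg_left h hc)
  have hu0_10 : ‖f dw0 - f dw10‖ ≤ c * 1 := by
    have h := dgDist_ub wke0_10 1 rfl
    norm_num at h
    exact le_trans (hf dw0 dw10).2 (mul_le_mul_of_nonneg_left h hc)
  have hu0_11 : ‖f dw0 - f dw11‖ ≤ c * 1 := by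
    have h := dgDist_ub wke0_11 1 rfl
    norm_num at h
    exact le_trans (hf dw0 dw11).2 (mul_le_mul_of_nonneg_left h hc)
  have hu3_11 : ‖f dw3 - f dw11‖ ≤ c * 1 := by
    have h := dgDist_ub wke3_11 1 rfl
    norm_num at h
    exact le_trans (hf dw3 dw11).2 (mul_le_mul_of_nonneg_left h hc)
  -- pentagonal inequalities
  have hp0 := dgPentN (f dw4) (f dw5) (f dw8) (f dw0) (f dw2)
  have hp1 := dgPentN (f dw4) (f dw5) (f dw9) (f dw0) (f dw2)
  have hp2 := dgPentN (f dw4) (f dw8) (f dw9) (f dw1) (f dw3)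
  have hp3 := dgPentN (f dw5) (f dw8) (f dw9) (f dw1) (f dw3)
  have hp4 := dgPentN (f dw6) (f dw7) (f dw10) (f dw1) (f dw2)
  have hp5 := dgPentN (f dw6) (f dw7) (f dw11) (f dw1) (f dw2)
  have hp6 := dgPentN (f dw6) (f dw10) (f dw11) (f dw0) (f dw3)
  have hp7 := dgPentN (f dw7) (f dw10) (f dw11) (f dw0) (f dw3)
  -- triangle inequalities
  have hta0 := dgTriA (f dw0) (f dw2) (f dw6)
  have hta1 := dgTriA (f dw0) (f dw2) (f dw7)
  have hta2 := dgTriA (f dw0) (f dw3) (f dw8)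
  have hta3 := dgTriA (f dw0) (f dw3) (f dw9)
  have hta4 := dgTriA (f dw1) (f dw2) (f dw4)
  have hta5 := dgTriA (f dw1) (f dw2) (f dw5)
  have hta6 := dgTriA (f dw1) (f dw3) (f dw10)
  have hta7 := dgTriA (f dw1) (f dw3) (f dw11)
  have htb0 := dgTriB (f dw2) (f dw0) (f dw10)
  have htb1 := dgTriB (f dw2) (f dw0) (f dw11)
  have htb2 := dgTriB (f dw2) (f dw1) (f dw8)
  have htb3 := dgTriB (f dw2) (f dw1) (f dw9)
  have htb4 := dgTriB (f dw3) (f dw0) (f dw4)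
  have htb5 := dgTriB (f dw3) (f dw0) (f dw5)
  have htb6 := dgTriB (f dw3) (f dw1) (f dw6)
  have htb7 := dgTriB (f dw3) (f dw1) (f dw7)
  linarith
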